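/- arXiv:2207.14479 — 6 statements merged into one kernel-verified Lean document; each statement's English description precedes it below -/
import Mathlib

section
/- For integers $N \ge 0$, $m \ge 0$ and real $p$ with $0 < p < 1$, the monic Krawtchouk polynomial of degree $N+1+m$, defined by $\check{P}^{\text{monic}}_n(x) = \sum_{k=0}^n (-N+k)_{n-k} \frac{(-n)_k(-x)_k}{k!} p^{n-k}$ (where $(a)_j$ is the Pochhammer symbol), factorises as $\check{P}^{\text{monic}}_{N+1+m}(x) = \prod_{k=0}^{N}(x-k) \cdot \sum_{k=0}^m (N+2+k)_{m-k} \frac{(-m)_k(-x+N+1)_k}{k!} p^{m-k}$, as polynomials in $x$. -/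
/-- Rising Pochhammer symbol `(a)_j = a(a+1)⋯(a+j-1)`. -/
noncomputable def poch (a : ℝ) (j : ℕ) : ℝ := ∏ i ∈ Finset.range j, (a + i)

/-- Monic Krawtchouk polynomial
`P^monic_n(x) = ∑_{k=0}^n (-N+k)_{n-k} (-n)_k (-x)_k / k! · p^{n-k}`. -/
noncomputable def krawMonic (N : ℕ) (p : ℝ) (n : ℕ) (x : ℝ) : ℝ :=
  ∑ k ∈ Finset.range (n + 1),
    poch ((k : ℝ) - N) (n - k) * poch (-(n : ℝ)) k * poch (-x) k / (Nat.factorial k) *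
      p ^ (n - k)

/-!
With `n = N + 1 + m`, every term of index `k ≤ N` vanishes, because `(k - N)_{n-k}` then runs
through `0`. In a term of index `N + 1 + i`, the first `N + 1` factors of `(-x)_{N+1+i}` give
`±∏_{k ≤ N} (x - k)`, those of `(-n)_{N+1+i}` give `±(m + N + 1)! / m!`, and the remaining
factorials recombine into the coefficient `(N + 2 + i)_{m-i} / i!` of the degree-`m` sum.
-/

open Finset Polynomial
open scoped Nat

lemma poch_eq_eval_ascPochhammer (a : ℝ) (t : ℕ) : poch a t = (ascPochhammer ℝ t).eval a := by
  induction t with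
  | zero => simp [poch]
  | succ t ih => simp [poch, Finset.prod_range_succ, ascPochhammer_succ_right, ← ih]

lemma poch_add (a : ℝ) (s t : ℕ) : poch a (s + t) = poch a s * poch (a + s) t := by
  simp only [poch, prod_range_add, Nat.cast_add, add_assoc]

lemma poch_neg (a : ℝ) (t : ℕ) : poch (-a) t = (-1) ^ t * ∏ k ∈ range t, (a - k) := by
  rw [poch_eq_eval_ascPochhammer, ascPochhammer_eval_neg_eq_descPochhammer,
    descPochhammer_eval_eq_prod_range]

lemma poch_neg_natCast (n t : ℕ) :
    poch (-(n : ℝ)) t = (-1) ^ t * (n.descFactorial t : ℝ) := by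
  rw [poch_eq_eval_ascPochhammer, ascPochhammer_eval_neg_eq_descPochhammer,
    descPochhammer_eval_eq_descFactorial]

lemma factorial_mul_poch (a t : ℕ) : (a ! : ℝ) * poch (a + 1) t = (a + t)! := by
  rw [poch_eq_eval_ascPochhammer, ← Nat.cast_add_one, ← Nat.cast_ascFactorial]
  exact_mod_cast Nat.factorial_mul_ascFactorial a t

lemma poch_mul_descFactorial_div_factorial (N i d : ℕ) :
    poch (i + 1) d * ((N + 1 + i + d).descFactorial (N + 1) : ℝ) / (N + 1 + i)! =
      poch (N + 2 + i) d / i ! := by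
  have hlow : (i ! : ℝ) * poch (i + 1) d = (i + d)! := factorial_mul_poch i d
  have hmid : ((i + d)! : ℝ) * (N + 1 + i + d).descFactorial (N + 1) = (N + 1 + i + d)! := by
    have h := Nat.factorial_mul_descFactorial (show N + 1 ≤ N + 1 + i + d by omega)
    rw [show N + 1 + i + d - (N + 1) = i + d by omega] at h
    exact_mod_cast h
  have hhigh : ((N + 1 + i)! : ℝ) * poch (N + 2 + i) d = (N + 1 + i + d)! := by
    have h := factorial_mul_poch (N + 1 + i) d
    rwa [show ((N + 1 + i : ℕ) : ℝ) + 1 = N + 2 + i by push_cast; ring] at h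
  rw [div_eq_div_iff (by positivity) (by positivity)]
  linear_combination ((N + 1 + i + d).descFactorial (N + 1) : ℝ) * hlow + hmid - hhigh

lemma krawMonic_summand_eq_zero (N m : ℕ) (p x : ℝ) {k : ℕ} (hk : k ≤ N) :
    poch ((k : ℝ) - N) (N + 1 + m - k) * poch (-((N + 1 + m : ℕ) : ℝ)) k * poch (-x) k / k ! *
      p ^ (N + 1 + m - k) = 0 := by
  have hzero : poch ((k : ℝ) - N) (N + 1 + m - k) = 0 := by
    rw [show (k : ℝ) - N = -((N - k : ℕ) : ℝ) by push_cast [hk]; ring, poch_neg_natCast,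
      Nat.descFactorial_eq_zero_iff_lt.mpr (by omega), Nat.cast_zero, mul_zero]
  rw [hzero, zero_mul, zero_mul, zero_div, zero_mul]

lemma krawMonic_summand_shift (N m : ℕ) (p x : ℝ) {i : ℕ} (hi : i ≤ m) :
    poch (((N + 1 + i : ℕ) : ℝ) - N) (N + 1 + m - (N + 1 + i)) *
        poch (-((N + 1 + m : ℕ) : ℝ)) (N + 1 + i) * poch (-x) (N + 1 + i) / (N + 1 + i)! *
          p ^ (N + 1 + m - (N + 1 + i)) =
      (∏ k ∈ range (N + 1), (x - k)) *
        (poch ((N : ℝ) + 2 + i) (m - i) * poch (-(m : ℝ)) i * poch (-x + N + 1) i / i ! *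
          p ^ (m - i)) := by
  obtain ⟨d, rfl⟩ := Nat.exists_eq_add_of_le hi
  have hn : poch (-((N + 1 + (i + d) : ℕ) : ℝ)) (N + 1 + i) =
      (-1) ^ (N + 1) * ((N + 1 + i + d).descFactorial (N + 1) : ℝ) *
        poch (-((i + d : ℕ) : ℝ)) i := by
    rw [poch_add, poch_neg_natCast, show N + 1 + (i + d) = N + 1 + i + d by ring]
    congr 2; push_cast; ring
  have hx : poch (-x) (N + 1 + i) =
      (-1) ^ (N + 1) * (∏ k ∈ range (N + 1), (x - k)) * poch (-x + N + 1) i := by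
    rw [poch_add, poch_neg]; push_cast; ring_nf
  have hsign : ((-1 : ℝ) ^ (N + 1)) ^ 2 = 1 := by
    rw [← pow_mul, mul_comm, pow_mul, neg_one_sq, one_pow]
  rw [show N + 1 + (i + d) - (N + 1 + i) = d by omega, Nat.add_sub_cancel_left,
    show ((N + 1 + i : ℕ) : ℝ) - N = i + 1 by push_cast; ring, hn, hx]
  calc _ = ((-1 : ℝ) ^ (N + 1)) ^ 2 *
          (poch (i + 1) d * ((N + 1 + i + d).descFactorial (N + 1) : ℝ) / (N + 1 + i)!) *
            (∏ k ∈ range (N + 1), (x - k)) * poch (-((i + d : ℕ) : ℝ)) i *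
              poch (-x + N + 1) i * p ^ d := by ring
    _ = _ := by rw [hsign, poch_mul_descFactorial_div_factorial]; ring

theorem krawtchouk_monic_factorisation_general (N m : ℕ) (p : ℝ) (x : ℝ) :
    krawMonic N p (N + 1 + m) x =
      (∏ k ∈ Finset.range (N + 1), (x - k)) *
        ∑ k ∈ Finset.range (m + 1),
          poch ((N : ℝ) + 2 + k) (m - k) * poch (-(m : ℝ)) k * poch (-x + N + 1) k /
              (Nat.factorial k) * p ^ (m - k) := by
  rw [krawMonic, show N + 1 + m + 1 = (N + 1) + (m + 1) by omega, sum_range_add,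
    sum_eq_zero fun k hk =>
      krawMonic_summand_eq_zero N m p x (Nat.lt_succ_iff.mp (mem_range.mp hk)),
    zero_add, mul_sum]
  exact sum_congr rfl fun i hi =>
    krawMonic_summand_shift N m p x (Nat.lt_succ_iff.mp (mem_range.mp hi))

/-- Diophantine factorisation of the monic Krawtchouk polynomial at
degree `N+1+m`. -/
theorem krawtchouk_monic_factorisation (N m : ℕ) (p : ℝ) (hp : 0 < p) (hp1 : p < 1) (x : ℝ) :
    krawMonic N p (N + 1 + m) x =
      (∏ k ∈ Finset.range (N + 1), (x - k)) *
        ∑ k ∈ Finset.range (m + 1),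
          poch ((N : ℝ) + 2 + k) (m - k) * poch (-(m : ℝ)) k * poch (-x + N + 1) k /
              (Nat.factorial k) * p ^ (m - k) :=
  krawtchouk_monic_factorisation_general N m p x
end

section
/- For nonnegative integers $M, N$ and real parameter $p$ with $0<p<1$, and for every polynomial-valued Krawtchouk polynomial $\check{P}_n(x;N,p) = {}_2F_1(-n,-x;-N;p^{-1})$ with $0 \le n \le N$, the identity $\sum_{j=0}^M (-1)^j \binom{M}{j} (x+1+j)_{M-j} (x-N)_j\, \check{P}_n(x+j;N,p) = (N+1)_M\, \check{P}_n(x+M; N+M, p)$ holds as an identity of rational functions (polynomials) in $x$. -/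
/-- Krawtchouk polynomial `P_n(x;N,p) = ₂F₁(-n,-x;-N;p⁻¹)`, normalised by `P_n(0)=1`. -/
noncomputable def kraw (N : ℕ) (p : ℝ) (n : ℕ) (x : ℝ) : ℝ :=
  ∑ k ∈ Finset.range (n + 1),
    poch (-(n : ℝ)) k * poch (-x) k / (poch (-(N : ℝ)) k * (Nat.factorial k)) * p⁻¹ ^ k

open Finset

lemma poch_succ (a : ℝ) (k : ℕ) : poch a (k + 1) = poch a k * (a + k) :=
  prod_range_succ _ _

lemma poch_succ' (a : ℝ) (k : ℕ) : poch a (k + 1) = a * poch (a + 1) k := by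
  simp only [poch, prod_range_succ', Nat.cast_add, Nat.cast_one, Nat.cast_zero, add_zero]
  rw [mul_comm]
  congr 1
  exact prod_congr rfl fun i _ => by ring

lemma add_one_mul_poch_neg (y : ℝ) (k : ℕ) :
    (y + 1) * poch (-y) k = (y + 1 - k) * poch (-(y + 1)) k := by
  have h₁ := poch_succ' (-(y + 1)) k
  rw [show -(y + 1) + 1 = -y by ring] at h₁
  linear_combination h₁ - poch_succ (-(y + 1)) k

lemma poch_neg_natCast_ne_zero {N k : ℕ} (hk : k ≤ N) : poch (-(N : ℝ)) k ≠ 0 := by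
  refine prod_ne_zero_iff.mpr fun i hi => ?_
  have : (i : ℝ) < N := by exact_mod_cast (mem_range.mp hi).trans_le hk
  linarith

lemma poch_neg_div_contiguous {N k : ℕ} (hk : k ≤ N) (x : ℝ) :
    ((N : ℝ) + 1) * (poch (-(x + 1)) k / poch (-((N : ℝ) + 1)) k) =
      (x + 1) * (poch (-x) k / poch (-(N : ℝ)) k) -
        (x - N) * (poch (-(x + 1)) k / poch (-(N : ℝ)) k) := by
  have hN := poch_neg_natCast_ne_zero hk
  have hN₁ := poch_neg_natCast_ne_zero (hk.trans N.le_succ)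
  push_cast at hN₁
  field_simp
  linear_combination poch (-(x + 1)) k * add_one_mul_poch_neg (N : ℝ) k
    - poch (-((N : ℝ) + 1)) k * add_one_mul_poch_neg x k

lemma kraw_contiguous {N n : ℕ} (p : ℝ) (hn : n ≤ N) (x : ℝ) :
    ((N : ℝ) + 1) * kraw (N + 1) p n (x + 1) =
      (x + 1) * kraw N p n x - (x - N) * kraw N p n (x + 1) := by
  simp only [kraw, mul_sum, ← sum_sub_distrib]
  refine sum_congr rfl fun k hk => ?_
  have hkN : k ≤ N := (Nat.lt_succ_iff.mp (mem_range.mp hk)).trans hn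
  push_cast
  linear_combination (poch (-(n : ℝ)) k / k.factorial * p⁻¹ ^ k) * poch_neg_div_contiguous hkN x

lemma sum_range_succ_neg_one_pow_mul_choose_succ {R : Type*} [CommRing R] (g : ℕ → R) (M : ℕ) :
    ∑ j ∈ range (M + 2), (-1) ^ j * ((M + 1).choose j : R) * g j =
      ∑ j ∈ range (M + 1), (-1) ^ j * (M.choose j : R) * (g j - g (j + 1)) := by
  have hM : ∑ j ∈ range (M + 1), (-1) ^ j * (M.choose j : R) * g j =
      g 0 + ∑ j ∈ range (M + 1), (-1) ^ (j + 1) * (M.choose (j + 1) : R) * g (j + 1) := by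
    rw [sum_range_succ' _ M, sum_range_succ _ M]
    simp [add_comm]
  simp only [mul_sub, sum_sub_distrib]
  rw [sum_range_succ', hM]
  simp only [Nat.choose_succ_succ, Nat.cast_add, mul_add, add_mul, sum_add_distrib, pow_succ,
    mul_neg_one, neg_mul, sum_neg_distrib, pow_zero, Nat.choose_zero_right, Nat.cast_one, mul_one]
  ring

lemma sum_choose_poch_eq_of_contiguous (f : ℕ → ℝ → ℝ) {N₀ : ℕ}
    (hf : ∀ N, N₀ ≤ N → ∀ x, ((N : ℝ) + 1) * f (N + 1) (x + 1) =
      (x + 1) * f N x - (x - N) * f N (x + 1))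
    (M : ℕ) {N : ℕ} (hN : N₀ ≤ N) (x : ℝ) :
    (∑ j ∈ range (M + 1),
        (-1) ^ j * (M.choose j : ℝ) * poch (x + 1 + j) (M - j) * poch (x - N) j * f N (x + j)) =
      poch ((N : ℝ) + 1) M * f (N + M) (x + M) := by
  induction M generalizing N x with
  | zero => simp [poch]
  | succ M ih =>
    set g : ℕ → ℝ := fun j => poch (x + 1 + j) (M + 1 - j) * poch (x - N) j * f N (x + j)
    have hdiff : ∀ j ∈ range (M + 1), g j - g (j + 1) =
        poch (x + 1 + 1 + j) (M - j) * poch (x + 1 - (N + 1 : ℕ) : ℝ) j *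
          (((N : ℝ) + 1) * f (N + 1) (x + 1 + j)) := by
      intro j hj
      have hjM : M + 1 - j = M - j + 1 := by have := mem_range.mp hj; omega
      have hpoch := poch_succ' (x + 1 + j) (M - j)
      simp only [g, hjM, Nat.add_sub_add_right, Nat.cast_add, Nat.cast_one, poch_succ (x - N) j]
      rw [hpoch, show x + 1 + j = x + j + 1 by ring, hf N hN (x + j)]
      ring_nf
    calc _ = ∑ j ∈ range (M + 2), (-1) ^ j * ((M + 1).choose j : ℝ) * g j := by
          simp only [g, mul_assoc]
      _ = ∑ j ∈ range (M + 1), (-1) ^ j * (M.choose j : ℝ) * (g j - g (j + 1)) :=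
          sum_range_succ_neg_one_pow_mul_choose_succ g M
      _ = ((N : ℝ) + 1) * ∑ j ∈ range (M + 1), (-1) ^ j * (M.choose j : ℝ) *
            poch (x + 1 + 1 + j) (M - j) * poch (x + 1 - (N + 1 : ℕ) : ℝ) j *
              f (N + 1) (x + 1 + j) := by
          rw [mul_sum]
          exact sum_congr rfl fun j hj => by rw [hdiff j hj]; ring
      _ = _ := by
          rw [ih (hN.trans N.le_succ), poch_succ', show N + 1 + M = N + (M + 1) by ring]
          push_cast
          ring_nf

theorem krawtchouk_shape_invariance_general (M N n : ℕ) (p : ℝ)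
    (hn : n ≤ N) (x : ℝ) :
    (∑ j ∈ Finset.range (M + 1),
        (-1) ^ j * (M.choose j : ℝ) * poch (x + 1 + j) (M - j) * poch (x - N) j *
          kraw N p n (x + j)) =
      poch ((N : ℝ) + 1) M * kraw (N + M) p n (x + M) :=
  sum_choose_poch_eq_of_contiguous (fun N => kraw N p n)
    (fun _ hN x => kraw_contiguous p hN x) M hn x

/-- family (i) shape-invariance transformation formula for the
Krawtchouk polynomials. -/
theorem krawtchouk_shape_invariance (M N n : ℕ) (p : ℝ) (hp : 0 < p) (hp1 : p < 1)
    (hn : n ≤ N) (x : ℝ) :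
    (∑ j ∈ Finset.range (M + 1),
        (-1) ^ j * (M.choose j : ℝ) * poch (x + 1 + j) (M - j) * poch (x - N) j *
          kraw N p n (x + j)) =
      poch ((N : ℝ) + 1) M * kraw (N + M) p n (x + M) :=
  krawtchouk_shape_invariance_general M N n p hn x
end

section
/- For $0<q<1$, nonnegative integers $M$, $N$, parameters $0<a,b<1$, and $0 \le n \le N$, the $q$-Hahn polynomial $\check{P}_n(x;N,a,b) = {}_3\phi_2(q^{-n}, abq^{n-1}, q^{-x}; a, q^{-N}; q; q)$ satisfies $\sum_{j=0}^M (-1)^j \genfrac{[}{]}{0pt}{}{M}{j}_q q^{\frac{1}{2}j(j+1)+Nj} (q^{x+1+j};q)_{M-j} (q^{x-N};q)_j\, \check{P}_n(x+j; N, a, b) = (q^{N+1};q)_M\, \check{P}_n(x+M; N+M, a, b)$, as an identity of Laurent polynomials in $z=q^x$. -/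
/-- q-Pochhammer symbol `(a;q)_n`. -/
noncomputable def qpoch (a q : ℝ) (n : ℕ) : ℝ := ∏ j ∈ Finset.range n, (1 - a * q ^ j)

/-- `(q;q)_n`. -/
noncomputable def qfac (q : ℝ) (n : ℕ) : ℝ := qpoch q q n

/-- Gaussian binomial coefficient. -/
noncomputable def qbinom (q : ℝ) (M j : ℕ) : ℝ := qfac q M / (qfac q j * qfac q (M - j))

/-- q-Hahn polynomial `P_n(x;N,a,b) = ₃φ₂(q^{-n}, abq^{n-1}, q^{-x}; a, q^{-N}; q; q)`,
written as a function of the Laurent variable `z = q^x`. -/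
noncomputable def qHahn (q a b : ℝ) (N n : ℕ) (z : ℝ) : ℝ :=
  ∑ k ∈ Finset.range (n + 1),
    qpoch (q⁻¹ ^ n) q k * qpoch (a * b * q ^ n * q⁻¹) q k * qpoch z⁻¹ q k /
      (qpoch a q k * qpoch (q⁻¹ ^ N) q k * qfac q k) * q ^ k


/-! Write `Sᴹ_N f` (`shapeSum q N M z f`) for the left-hand side, with `f j = P_N(z q^j)`. A q-Pascal split of its
binomial coefficient turns `Sᴹ⁺¹_N` into `Sᴹ_{N+1}` applied to the first-order operator
`(D_N f)(z) = (1 - zq) f(z) - q^{N+1} (1 - z q^{-N}) f(zq)`, so `Sᴹ_N = D_{N+M-1} ∘ ⋯ ∘ D_N`.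
The q-Hahn polynomials are shape invariant under `D_N`: termwise in their `₃φ₂` series,
`D_N P_N(z) = (1 - q^{N+1}) P_{N+1}(zq)`. Induction on `M` then gives the factor `(q^{N+1};q)_M`. -/

open Finset

@[simp]
lemma qpoch_zero (a q : ℝ) : qpoch a q 0 = 1 := prod_range_zero _

@[simp]
lemma qfac_zero (q : ℝ) : qfac q 0 = 1 := qpoch_zero q q

lemma qpoch_succ (a q : ℝ) (n : ℕ) : qpoch a q (n + 1) = qpoch a q n * (1 - a * q ^ n) :=
  prod_range_succ _ _

lemma qpoch_succ' (a q : ℝ) (n : ℕ) : qpoch a q (n + 1) = (1 - a) * qpoch (a * q) q n := by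
  simp only [qpoch, prod_range_succ', pow_zero, mul_one, mul_assoc, ← pow_succ']
  ring

lemma qpoch_ne_zero {a q : ℝ} {n : ℕ} (h : ∀ j < n, a * q ^ j ≠ 1) : qpoch a q n ≠ 0 :=
  prod_ne_zero_iff.mpr fun j hj => sub_ne_zero.mpr (h j (mem_range.mp hj)).symm

lemma qpoch_inv_pow_ne_zero {q : ℝ} (hq0 : 0 < q) (hq1 : q ≠ 1) {N k : ℕ} (hk : k ≤ N) :
    qpoch (q⁻¹ ^ N) q k ≠ 0 :=
  qpoch_ne_zero fun j hj h => by
    rw [inv_pow, inv_mul_eq_one₀ (pow_ne_zero _ hq0.ne')] at h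
    exact absurd (pow_right_injective₀ hq0 hq1 h) (by omega)

lemma one_sub_pow_succ_ne_zero {q : ℝ} (hq0 : 0 < q) (hq1 : q ≠ 1) (n : ℕ) :
    1 - q ^ (n + 1) ≠ 0 :=
  sub_ne_zero.mpr fun h => hq1 ((pow_eq_one_iff_of_nonneg hq0.le n.succ_ne_zero).mp h.symm)

lemma qfac_ne_zero {q : ℝ} (hq0 : 0 < q) (hq1 : q ≠ 1) (n : ℕ) : qfac q n ≠ 0 :=
  qpoch_ne_zero fun j _ h => one_sub_pow_succ_ne_zero hq0 hq1 j (by rw [pow_succ', h, sub_self])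

lemma qfac_succ (q : ℝ) (n : ℕ) : qfac q (n + 1) = qfac q n * (1 - q ^ (n + 1)) := by
  rw [qfac, qpoch_succ, ← pow_succ']
  rfl

lemma qbinom_zero_right {q : ℝ} (hq0 : 0 < q) (hq1 : q ≠ 1) (M : ℕ) : qbinom q M 0 = 1 := by
  rw [qbinom, Nat.sub_zero, qfac_zero, one_mul, div_self (qfac_ne_zero hq0 hq1 M)]

lemma qbinom_self {q : ℝ} (hq0 : 0 < q) (hq1 : q ≠ 1) (M : ℕ) : qbinom q M M = 1 := by
  rw [qbinom, Nat.sub_self, qfac_zero, mul_one, div_self (qfac_ne_zero hq0 hq1 M)]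

lemma qbinom_succ_succ {q : ℝ} (hq0 : 0 < q) (hq1 : q ≠ 1) {M j : ℕ} (h : j < M) :
    qbinom q (M + 1) (j + 1) = q ^ (j + 1) * qbinom q M (j + 1) + qbinom q M j := by
  obtain ⟨d, rfl⟩ : ∃ d, M = j + 1 + d := ⟨M - (j + 1), by omega⟩
  rw [qbinom, qbinom, qbinom, show j + 1 + d + 1 - (j + 1) = d + 1 by omega,
    show j + 1 + d - (j + 1) = d by omega, show j + 1 + d - j = d + 1 by omega,
    qfac_succ q (j + 1 + d), qfac_succ q j, qfac_succ q d,
    show j + 1 + d + 1 = (j + 1) + (d + 1) by omega, pow_add]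
  have := qfac_ne_zero hq0 hq1 j
  have := qfac_ne_zero hq0 hq1 d
  have := qfac_ne_zero hq0 hq1 (j + 1 + d)
  have := one_sub_pow_succ_ne_zero hq0 hq1 j
  have := one_sub_pow_succ_ne_zero hq0 hq1 d
  field_simp
  ring

lemma sum_range_succ_eq_sum_add {M : Type*} [AddCommMonoid M] {n : ℕ} {t u v : ℕ → M}
    (h0 : t 0 = u 0) (hs : ∀ j < n, t (j + 1) = u (j + 1) + v j) (hlast : t (n + 1) = v n) :
    ∑ j ∈ range (n + 2), t j = ∑ j ∈ range (n + 1), (u j + v j) := by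
  rw [sum_range_succ, sum_range_succ', sum_congr rfl fun j hj => hs j (mem_range.mp hj),
    sum_add_distrib, h0, hlast, sum_add_distrib, sum_range_succ' u, sum_range_succ v]
  abel

noncomputable def shapeSum (q : ℝ) (N M : ℕ) (z : ℝ) (f : ℕ → ℝ) : ℝ :=
  ∑ j ∈ range (M + 1), (-1) ^ j * qbinom q M j * q ^ (j * (j + 1) / 2 + N * j) *
    qpoch (z * q ^ (1 + j)) q (M - j) * qpoch (z * q⁻¹ ^ N) q j * f j

lemma shapeSum_zero (q : ℝ) (N : ℕ) (z : ℝ) (f : ℕ → ℝ) : shapeSum q N 0 z f = f 0 := by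
  simp [shapeSum, qbinom, qfac, qpoch]

lemma shapeSum_const_mul (q : ℝ) (N M : ℕ) (z c : ℝ) (f : ℕ → ℝ) :
    shapeSum q N M z (fun j => c * f j) = c * shapeSum q N M z f := by
  rw [shapeSum, shapeSum, mul_sum]
  exact sum_congr rfl fun _ _ => by ring

lemma triangle_succ (j : ℕ) : (j + 1) * (j + 1 + 1) / 2 = j * (j + 1) / 2 + (j + 1) := by
  rw [show (j + 1) * (j + 1 + 1) = j * (j + 1) + 2 * (j + 1) by ring,
    Nat.add_mul_div_left _ _ two_pos]

lemma shapeSum_succ {q : ℝ} (hq0 : 0 < q) (hq1 : q ≠ 1) (N M : ℕ) (z : ℝ) (f : ℕ → ℝ) :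
    shapeSum q N (M + 1) z f = shapeSum q (N + 1) M (z * q)
      (fun i => (1 - z * q ^ i * q) * f i - q ^ (N + 1) * (1 - z * q ^ i * q⁻¹ ^ N) * f (i + 1)) := by
  set T : ℝ → ℕ → ℝ := fun c j => (-1) ^ j * c * q ^ (j * (j + 1) / 2 + N * j) *
    qpoch (z * q ^ (1 + j)) q (M + 1 - j) * qpoch (z * q⁻¹ ^ N) q j * f j with hT
  change ∑ j ∈ range (M + 2), T (qbinom q (M + 1) j) j = _
  rw [sum_range_succ_eq_sum_add (u := fun j => T (q ^ j * qbinom q M j) j)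
    (v := fun j => T (qbinom q M j) (j + 1))]
  · refine sum_congr rfl fun j hj => ?_
    have hjM : j ≤ M := Nat.lt_succ_iff.mp (mem_range.mp hj)
    have hpow : q ^ (j * (j + 1) / 2 + (N + 1) * j) = q ^ j * q ^ (j * (j + 1) / 2 + N * j) := by
      rw [← pow_add]; ring_nf
    have hpow_succ : q ^ ((j + 1) * (j + 1 + 1) / 2 + N * (j + 1)) =
        q ^ (N + 1) * q ^ (j * (j + 1) / 2 + (N + 1) * j) := by
      rw [← pow_add, triangle_succ]; ring_nf
    have hpoch : qpoch (z * q ^ (1 + j)) q (M + 1 - j) =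
        (1 - z * q ^ j * q) * qpoch (z * q * q ^ (1 + j)) q (M - j) := by
      rw [show M + 1 - j = M - j + 1 by omega, qpoch_succ']; ring_nf
    have hpoch_succ : qpoch (z * q ^ (1 + (j + 1))) q (M + 1 - (j + 1)) =
        qpoch (z * q * q ^ (1 + j)) q (M - j) := by
      rw [Nat.add_sub_add_right]; ring_nf
    have hinv : z * q * q⁻¹ ^ (N + 1) = z * q⁻¹ ^ N := by
      rw [pow_succ]; field_simp
    simp only [hT, hpow, hpow_succ, hpoch, hpoch_succ, hinv, qpoch_succ (z * q⁻¹ ^ N) q j]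
    ring
  · simp only [hT, qbinom_zero_right hq0 hq1, pow_zero, mul_one]
  · intro j hj
    simp only [hT, qbinom_succ_succ hq0 hq1 hj]
    ring
  · simp only [hT, qbinom_self hq0 hq1]

lemma qpoch_contiguous {q x z : ℝ} (hq : q ≠ 0) (hx0 : x ≠ 0) (hxq : x ≠ q) (hz : z ≠ 0)
    {k : ℕ} (hk : qpoch x q k ≠ 0) :
    (1 - z * q) * qpoch z⁻¹ q k / qpoch x q k -
        q / x * (1 - z * x) * qpoch (z * q)⁻¹ q k / qpoch x q k =
      (1 - q / x) * qpoch (z * q)⁻¹ q k / qpoch (x / q) q k := by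
  cases k with
  | zero =>
    simp only [qpoch_zero, div_one, mul_one]
    field_simp
    ring
  | succ m =>
    rw [qpoch_succ x] at hk ⊢
    obtain ⟨hm, hxm⟩ := mul_ne_zero_iff.mp hk
    have hxq' : 1 - x / q ≠ 0 := by
      rwa [sub_ne_zero, ne_comm, Ne, div_eq_one_iff_eq hq]
    rw [qpoch_succ' (z * q)⁻¹, qpoch_succ' (x / q), qpoch_succ z⁻¹,
      show (z * q)⁻¹ * q = z⁻¹ by field_simp, div_mul_cancel₀ x hq, div_sub_div_same, div_eq_div_iff (mul_ne_zero hm hxm) (mul_ne_zero hxq' hm)]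
    field_simp
    ring

lemma qHahn_contiguous (q a b : ℝ) (hq0 : 0 < q) (hq1 : q ≠ 1) {N n : ℕ} (hn : n ≤ N)
    {z : ℝ} (hz : z ≠ 0) :
    (1 - z * q) * qHahn q a b N n z - q ^ (N + 1) * (1 - z * q⁻¹ ^ N) * qHahn q a b N n (z * q) =
      (1 - q ^ (N + 1)) * qHahn q a b (N + 1) n (z * q) := by
  have hx : q / q⁻¹ ^ N = q ^ (N + 1) := by rw [inv_pow, div_inv_eq_mul, pow_succ']
  have hxq : q⁻¹ ^ N / q = q⁻¹ ^ (N + 1) := by rw [pow_succ, div_eq_mul_inv]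
  have hxq' : q⁻¹ ^ N ≠ q := fun h => by
    rw [← div_eq_one_iff_eq hq0.ne', hxq, inv_pow, inv_eq_one,
      pow_eq_one_iff_of_nonneg hq0.le N.succ_ne_zero] at h
    exact hq1 h
  unfold qHahn
  rw [mul_sum, mul_sum, mul_sum, ← sum_sub_distrib]
  refine sum_congr rfl fun k hk => ?_
  -- `c` collects the factors of the `k`-th term that depend on neither `z` nor `N`
  set c := qpoch (q⁻¹ ^ n) q k * qpoch (a * b * q ^ n * q⁻¹) q k * q ^ k / (qpoch a q k * qfac q k)
  have key := congrArg (c * ·) <| qpoch_contiguous hq0.ne' (pow_ne_zero N (inv_ne_zero hq0.ne'))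
    hxq' hz (qpoch_inv_pow_ne_zero hq0 hq1 ((Nat.lt_succ_iff.mp (mem_range.mp hk)).trans hn))
  simp only [hx, hxq] at key
  linear_combination key

theorem qHahn_shape_invariance_general (q a b : ℝ) (hq0 : 0 < q) (hq1 : q < 1)
    (M N n : ℕ) (hn : n ≤ N) (z : ℝ) (hz : z ≠ 0) :
    (∑ j ∈ Finset.range (M + 1),
        (-1) ^ j * qbinom q M j * q ^ (j * (j + 1) / 2 + N * j) *
          qpoch (z * q ^ (1 + j)) q (M - j) * qpoch (z * q⁻¹ ^ N) q j *
            qHahn q a b N n (z * q ^ j)) =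
      qpoch (q ^ (N + 1)) q M * qHahn q a b (N + M) n (z * q ^ M) := by
  change shapeSum q N M z (fun j => qHahn q a b N n (z * q ^ j)) = _
  induction M generalizing N z with
  | zero => simp [shapeSum_zero]
  | succ M ih =>
    have hstep : ∀ i, (1 - z * q ^ i * q) * qHahn q a b N n (z * q ^ i) -
        q ^ (N + 1) * (1 - z * q ^ i * q⁻¹ ^ N) * qHahn q a b N n (z * q ^ (i + 1)) =
        (1 - q ^ (N + 1)) * qHahn q a b (N + 1) n (z * q * q ^ i) := fun i => by
      rw [pow_succ q i, ← mul_assoc, mul_right_comm z q]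
      exact qHahn_contiguous q a b hq0 hq1.ne hn (mul_ne_zero hz (pow_ne_zero i hq0.ne'))
    rw [shapeSum_succ hq0 hq1.ne, funext hstep, shapeSum_const_mul,
      ih (N + 1) (hn.trans N.le_succ) (z * q) (mul_ne_zero hz hq0.ne'), qpoch_succ', ← pow_succ,
      show N + 1 + M = N + (M + 1) by omega, mul_assoc z, ← pow_succ']
    ring

/-- family (iv) transformation formula of Theorem 4.2 for the q-Hahn
polynomials, as an identity of Laurent polynomials in `z = q^x`. -/
theorem qHahn_shape_invariance (q a b : ℝ) (hq0 : 0 < q) (hq1 : q < 1)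
    (ha0 : 0 < a) (ha1 : a < 1) (hb0 : 0 < b) (hb1 : b < 1)
    (M N n : ℕ) (hn : n ≤ N) (z : ℝ) (hz : z ≠ 0) :
    (∑ j ∈ Finset.range (M + 1),
        (-1) ^ j * qbinom q M j * q ^ (j * (j + 1) / 2 + N * j) *
          qpoch (z * q ^ (1 + j)) q (M - j) * qpoch (z * q⁻¹ ^ N) q j *
            qHahn q a b N n (z * q ^ j)) =
      qpoch (q ^ (N + 1)) q M * qHahn q a b (N + M) n (z * q ^ M) :=
  qHahn_shape_invariance_general q a b hq0 hq1 M N n hn z hz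
end

section
/- Define the forward $x$-shift operator for the Krawtchouk family (i) by $(\tilde{\mathcal{F}}(x,N) f)(x) = \frac{1}{N+1}\big((x+1) f(x) + (N-x) f(x+1)\big)$. Then for all integers $M \ge 1$ and $N \ge 0$, the ordered product $\tilde{\mathcal{F}}(x+M-1, N+M-1) \cdots \tilde{\mathcal{F}}(x+1,N+1)\tilde{\mathcal{F}}(x,N)$ applied to a function $f$ equals $\frac{1}{(N+1)_M} \sum_{j=0}^M (-1)^j \binom{M}{j} (x+1+j)_{M-j} (x-N)_j\, f(x+j)$. -/
/-- Iterated application of the Krawtchouk forward x-shift operators: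
`krawIter N f 0 = f`, and `krawIter N f (k+1) = 𝓕(x+k, N+k) (krawIter N f k)`, where
`(𝓕(x+k,N+k) g)(x) = ((x+k+1) g(x) + (N-x) g(x+1)) / (N+k+1)`. -/
noncomputable def krawIter (N : ℕ) (f : ℝ → ℝ) : ℕ → ℝ → ℝ
  | 0 => f
  | k + 1 => fun x =>
      ((x + k + 1) * krawIter N f k x + ((N : ℝ) - x) * krawIter N f k (x + 1)) /
        ((N : ℝ) + k + 1)


lemma poch_succ_right (a : ℝ) (j : ℕ) : poch a (j + 1) = poch a j * (a + j) :=
  Finset.prod_range_succ _ _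

lemma poch_succ_left (a : ℝ) (j : ℕ) : poch a (j + 1) = a * poch (a + 1) j := by
  unfold poch
  rw [Finset.prod_range_succ' (fun i => a + (i : ℝ)) j]
  push_cast
  rw [add_zero, mul_comm]
  congr 1
  exact Finset.prod_congr rfl fun i _ => by ring

lemma key (N M : ℕ) (f : ℝ → ℝ) (x : ℝ) :
    (x + M + 1) * (∑ j ∈ Finset.range (M + 1),
        (-1 : ℝ) ^ j * (M.choose j : ℝ) * poch (x + 1 + j) (M - j) * poch (x - N) j * f (x + j))
      + ((N : ℝ) - x) * (∑ j ∈ Finset.range (M + 1),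
        (-1 : ℝ) ^ j * (M.choose j : ℝ) * poch (x + 1 + 1 + j) (M - j) * poch (x + 1 - N) j *
          f (x + 1 + j))
    = ∑ j ∈ Finset.range (M + 2),
        (-1 : ℝ) ^ j * ((M + 1).choose j : ℝ) * poch (x + 1 + j) (M + 1 - j) * poch (x - N) j *
          f (x + j) := by
  rw [Finset.mul_sum, Finset.mul_sum]
  rw [Finset.sum_range_succ' (n := M + 1)]
  push_cast
  have pascal : ∀ j ∈ Finset.range (M + 1),
      (-1 : ℝ) ^ (j + 1) * ((M + 1).choose (j + 1) : ℝ) * poch (x + 1 + ((j : ℝ) + 1)) (M - j)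
          * poch (x - N) (j + 1) * f (x + ((j : ℝ) + 1))
      = ((-1 : ℝ) ^ (j + 1) * (M.choose (j + 1) : ℝ) * poch (x + 1 + ((j : ℝ) + 1)) (M - j)
          * poch (x - N) (j + 1) * f (x + ((j : ℝ) + 1)))
        + ((-1 : ℝ) ^ (j + 1) * (M.choose j : ℝ) * poch (x + 1 + ((j : ℝ) + 1)) (M - j)
          * poch (x - N) (j + 1) * f (x + ((j : ℝ) + 1))) := by
    intro j _
    rw [Nat.choose_succ_succ]
    push_cast
    ring
  rw [Finset.sum_congr rfl pascal, Finset.sum_add_distrib]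
  have h1 : ∑ j ∈ Finset.range (M + 1),
      (x + M + 1) * ((-1 : ℝ) ^ j * (M.choose j : ℝ) * poch (x + 1 + j) (M - j)
        * poch (x - N) j * f (x + j))
      = (∑ j ∈ Finset.range (M + 1),
          (-1 : ℝ) ^ (j + 1) * (M.choose (j + 1) : ℝ) * poch (x + 1 + ((j : ℝ) + 1)) (M - j)
            * poch (x - N) (j + 1) * f (x + ((j : ℝ) + 1)))
        + (-1 : ℝ) ^ 0 * ((M + 1).choose 0 : ℝ) * poch (x + 1 + 0) (M + 1)
            * poch (x - N) 0 * f (x + 0) := by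
    rw [Finset.sum_range_succ
      (fun j => (-1 : ℝ) ^ (j + 1) * (M.choose (j + 1) : ℝ) * poch (x + 1 + ((j : ℝ) + 1)) (M - j)
            * poch (x - N) (j + 1) * f (x + ((j : ℝ) + 1)))]
    rw [Finset.sum_range_succ' (fun j => (x + M + 1) * ((-1 : ℝ) ^ j * (M.choose j : ℝ)
      * poch (x + 1 + j) (M - j) * poch (x - N) j * f (x + j))) M]
    rw [Nat.choose_succ_self]
    push_cast
    rw [add_assoc]
    congr 1
    · simp only [mul_zero, zero_mul, add_zero]
      refine Finset.sum_congr rfl fun j hj => ?_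
      rw [Finset.mem_range] at hj
      obtain ⟨k, hk⟩ : ∃ k, M = j + 1 + k := ⟨M - (j + 1), by omega⟩
      subst hk
      have e1 : j + 1 + k - (j + 1) = k := by omega
      have e2 : j + 1 + k - j = k + 1 := by omega
      rw [e1, e2, poch_succ_right (x + 1 + ((j : ℝ) + 1)) k]
      push_cast
      ring
    · rw [Nat.sub_zero, poch_succ_right]
      simp only [Nat.choose_zero_right]
      push_cast
      ring
  have h2 : ∑ j ∈ Finset.range (M + 1),
      ((N : ℝ) - x) * ((-1 : ℝ) ^ j * (M.choose j : ℝ) * poch (x + 1 + 1 + j) (M - j)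
        * poch (x + 1 - N) j * f (x + 1 + j))
      = ∑ j ∈ Finset.range (M + 1),
          (-1 : ℝ) ^ (j + 1) * (M.choose j : ℝ) * poch (x + 1 + ((j : ℝ) + 1)) (M - j)
            * poch (x - N) (j + 1) * f (x + ((j : ℝ) + 1)) := by
    refine Finset.sum_congr rfl fun j _ => ?_
    rw [poch_succ_left (x - N) j]
    have e1 : x - (N : ℝ) + 1 = x + 1 - N := by ring
    have e2 : x + 1 + ((j : ℝ) + 1) = x + 1 + 1 + j := by ring
    have e3 : x + ((j : ℝ) + 1) = x + 1 + j := by ring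
    rw [e1, e2, e3]
    ring
  rw [h1, h2]
  ring

lemma poch_pos (N : ℕ) (M : ℕ) : 0 < poch ((N : ℝ) + 1) M := by
  unfold poch
  exact Finset.prod_pos fun i _ => by positivity

lemma algebra_step (p a b c d n m : ℝ) (hp : p ≠ 0) (h : n + m + 1 ≠ 0) :
    (c * (1 / p * a) + d * (1 / p * b)) / (n + m + 1) = 1 / (p * (n + 1 + m)) * (c * a + d * b) := by
  rw [one_div (p * (n + 1 + m)), mul_inv]
  ring

lemma aux (N : ℕ) (f : ℝ → ℝ) : ∀ (M : ℕ) (x : ℝ),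
    krawIter N f M x =
      (1 / poch ((N : ℝ) + 1) M) *
        ∑ j ∈ Finset.range (M + 1),
          (-1 : ℝ) ^ j * (M.choose j : ℝ) * poch (x + 1 + j) (M - j) * poch (x - N) j *
            f (x + j) := by
  intro M
  induction M with
  | zero => intro x; simp [krawIter, poch]
  | succ M ih =>
    intro x
    have hk := key N M f x
    have hP : poch ((N : ℝ) + 1) M ≠ 0 := ne_of_gt (poch_pos N M)
    have hNM : (N : ℝ) + M + 1 ≠ 0 := by positivity
    simp only [krawIter]
    rw [ih x, ih (x + 1), poch_succ_right ((N : ℝ) + 1) M, ← hk]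
    exact algebra_step _ _ _ _ _ _ _ hP hNM

/-- the ordered product
`𝓕(x+M-1,N+M-1) ⋯ 𝓕(x+1,N+1) 𝓕(x,N)` equals
`(1/(N+1)_M) ∑_{j=0}^M (-1)^j C(M,j) (x+1+j)_{M-j} (x-N)_j e^{j∂}`. -/
theorem krawtchouk_forward_shift_product (M : ℕ) (hM : 1 ≤ M) (N : ℕ) (f : ℝ → ℝ) (x : ℝ) :
    krawIter N f M x =
      (1 / poch ((N : ℝ) + 1) M) *
        ∑ j ∈ Finset.range (M + 1),
          (-1) ^ j * (M.choose j : ℝ) * poch (x + 1 + j) (M - j) * poch (x - N) j *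
            f (x + j) := by
  exact aux N f M x
end

section
/- For $0<q<1$, integer $N\ge0$, $m\ge 0$, and parameters $b,c,d$, the monic $q$-Racah polynomial $\check{P}^{\text{monic}}_n(x) = \sum_{k=0}^n \frac{(bq^k, cq^k, q^{k-N};q)_{n-k}}{(\tilde{d}q^{n+k};q)_{n-k}} \frac{(q^{-n}, q^{-x}, dq^x;q)_k}{(q;q)_k} q^k$ (with $\tilde{d} = bcd^{-1}q^{-N-1}$ and $(a_1,\ldots,a_r;q)_k = \prod_i (a_i;q)_k$) satisfies, at degree $n = N+1+m$, the factorisation $\check{P}^{\text{monic}}_{N+1+m}(x) = (-1)^{N+1} q^{-\binom{N+1}{2}} (q^{-x};q)_{N+1} (dq^x;q)_{N+1} \cdot q^{-(N+1)m} \sum_{l=0}^m \frac{(bq^{N+1+l}, cq^{N+1+l}, q^{N+2+l};q)_{m-l}}{(\tilde{d}q^{2(N+1)+m+l};q)_{m-l}} \frac{(q^{-m}, q^{-x+N+1}, dq^{x+N+1};q)_l}{(q;q)_l} q^l$, as an identity of Laurent polynomials in $z = q^{-x}$ (assuming the denominators $(\tilde{d}q^{j};q)_k$ are nonzero). -/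
/-- The parameter `d̃ = b c d⁻¹ q^{-N-1}`. -/
noncomputable def qRacahTd (q b c d : ℝ) (N : ℕ) : ℝ := b * c * d⁻¹ * q⁻¹ ^ (N + 1)

/-- Monic q-Racah polynomial, as a Laurent polynomial in `z = q^{-x}` (so that
`q^x = z⁻¹` and `dq^x = d z⁻¹`):
`P^monic_n = ∑_{k=0}^n ((bq^k,cq^k,q^{k-N};q)_{n-k}/(d̃q^{n+k};q)_{n-k}) ·
((q^{-n};q)_k (z;q)_k (dz⁻¹;q)_k/(q;q)_k) q^k`. -/
noncomputable def qRacahMonic (q b c d : ℝ) (N n : ℕ) (z : ℝ) : ℝ :=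
  ∑ k ∈ Finset.range (n + 1),
    qpoch (b * q ^ k) q (n - k) * qpoch (c * q ^ k) q (n - k) *
        qpoch (q⁻¹ ^ N * q ^ k) q (n - k) / qpoch (qRacahTd q b c d N * q ^ (n + k)) q (n - k) *
      (qpoch (q⁻¹ ^ n) q k * qpoch z q k * qpoch (d * z⁻¹) q k / qpoch q q k) * q ^ k

open Finset

lemma qpoch_add (a q : ℝ) (m n : ℕ) :
    qpoch a q (m + n) = qpoch a q m * qpoch (a * q ^ m) q n := by
  simp only [qpoch, prod_range_add, pow_add, mul_assoc]

section QPochhammer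

variable {q : ℝ}

lemma qpoch_eq_zero_of_mul_pow_eq_one {a : ℝ} {j n : ℕ} (h : a * q ^ j = 1) (hj : j < n) :
    qpoch a q n = 0 :=
  prod_eq_zero (mem_range.2 hj) (by rw [h, sub_self])

lemma qpoch_self_ne_zero (hq0 : 0 < q) (hq1 : q < 1) (n : ℕ) : qpoch q q n ≠ 0 :=
  prod_ne_zero_iff.2 fun j _ => by
    rw [← pow_succ']
    exact sub_ne_zero.2 (pow_lt_one₀ hq0.le hq1 j.succ_ne_zero).ne'

lemma qpoch_pow_succ (hq0 : 0 < q) (hq1 : q < 1) (s t : ℕ) :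
    qpoch (q ^ (s + 1)) q t = qpoch q q (s + t) / qpoch q q s := by
  rw [eq_div_iff (qpoch_self_ne_zero hq0 hq1 s), qpoch_add, pow_succ', mul_comm]

lemma qpoch_inv_pow_reverse (hq : q ≠ 0) (m n : ℕ) :
    qpoch (q⁻¹ ^ (m + n)) q n =
      (-1) ^ n * q⁻¹ ^ (n.choose 2 + n * (m + 1)) * qpoch (q ^ (m + 1)) q n := by
  induction n with
  | zero => simp [qpoch]
  | succ n ih =>
    have hshift (j : ℕ) : q⁻¹ ^ (m + (n + 1)) * q ^ (j + 1) = q⁻¹ ^ (m + n) * q ^ j := by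
      rw [inv_pow, inv_pow]
      field_simp
      ring
    simp only [qpoch] at ih ⊢
    rw [prod_range_succ' (fun j => 1 - q⁻¹ ^ (m + (n + 1)) * q ^ j),
      prod_range_succ (fun j => 1 - q ^ (m + 1) * q ^ j), Nat.choose_succ_succ',
      Nat.choose_one_right]
    simp only [hshift]
    rw [ih]
    simp only [inv_pow]
    field_simp
    ring

lemma qpoch_inv_pow_shift (hq0 : 0 < q) (hq1 : q < 1) (a : ℕ) {m l : ℕ} (hl : l ≤ m) :
    qpoch (q ^ (l + 1)) q (m - l) * qpoch (q⁻¹ ^ (a + m)) q (a + l) / qpoch q q (a + l) *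
        q ^ (a + l) =
      (-1) ^ a * q⁻¹ ^ a.choose 2 * q⁻¹ ^ (a * m) *
        (qpoch (q ^ (a + l + 1)) q (m - l) * (qpoch (q⁻¹ ^ m) q l / qpoch q q l) * q ^ l) := by
  have hsplit : qpoch (q⁻¹ ^ (a + m)) q (a + l) =
      qpoch (q⁻¹ ^ (m + a)) q a * qpoch (q⁻¹ ^ m) q l := by
    rw [qpoch_add, add_comm m]
    congr 2
    rw [inv_pow, inv_pow]
    field_simp [hq0.ne']
    ring
  rw [hsplit, qpoch_inv_pow_reverse hq0.ne', qpoch_pow_succ hq0 hq1, qpoch_pow_succ hq0 hq1,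
    qpoch_pow_succ hq0 hq1, Nat.add_sub_cancel' hl, show a + l + (m - l) = m + a by omega]
  have hFm := qpoch_self_ne_zero hq0 hq1 m
  simp only [inv_pow]
  field_simp
  ring

end QPochhammer

section QRacah

variable {q : ℝ}

noncomputable def qRacahSummand (q b c d : ℝ) (N n : ℕ) (z : ℝ) (k : ℕ) : ℝ :=
  qpoch (b * q ^ k) q (n - k) * qpoch (c * q ^ k) q (n - k) *
      qpoch (q⁻¹ ^ N * q ^ k) q (n - k) / qpoch (qRacahTd q b c d N * q ^ (n + k)) q (n - k) *
    (qpoch (q⁻¹ ^ n) q k * qpoch z q k * qpoch (d * z⁻¹) q k / qpoch q q k) * q ^ k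

lemma qRacahMonic_eq_sum_summand (q b c d : ℝ) (N n : ℕ) (z : ℝ) :
    qRacahMonic q b c d N n z = ∑ k ∈ range (n + 1), qRacahSummand q b c d N n z k :=
  rfl

lemma qRacahSummand_eq_zero (hq : q ≠ 0) (b c d : ℝ) {N n k : ℕ} (z : ℝ) (hk : k ≤ N)
    (hn : N < n) : qRacahSummand q b c d N n z k = 0 := by
  have hvanish : qpoch (q⁻¹ ^ N * q ^ k) q (n - k) = 0 :=
    qpoch_eq_zero_of_mul_pow_eq_one (j := N - k)
      (by rw [mul_assoc, ← pow_add, Nat.add_sub_cancel' hk, inv_pow,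
        inv_mul_cancel₀ (pow_ne_zero _ hq)])
      (by omega)
  rw [qRacahSummand, hvanish, mul_zero, zero_div, zero_mul, zero_mul]

lemma qRacahSummand_shift (hq0 : 0 < q) (hq1 : q < 1) (b c d : ℝ) {N m l : ℕ} (z : ℝ)
    (hl : l ≤ m) :
    qRacahSummand q b c d N (N + 1 + m) z (N + 1 + l) =
      (-1) ^ (N + 1) * q⁻¹ ^ ((N + 1).choose 2) *
          qpoch z q (N + 1) * qpoch (d * z⁻¹) q (N + 1) * q⁻¹ ^ ((N + 1) * m) *
        (qpoch (b * q ^ (N + 1 + l)) q (m - l) * qpoch (c * q ^ (N + 1 + l)) q (m - l) *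
              qpoch (q ^ (N + 2 + l)) q (m - l) /
                qpoch (qRacahTd q b c d N * q ^ (2 * (N + 1) + m + l)) q (m - l) *
            (qpoch (q⁻¹ ^ m) q l * qpoch (z * q ^ (N + 1)) q l *
              qpoch (d * z⁻¹ * q ^ (N + 1)) q l / qpoch q q l) * q ^ l) := by
  have hcancel : q⁻¹ ^ N * q ^ (N + 1 + l) = q ^ (l + 1) := by
    rw [inv_pow]
    field_simp [hq0.ne']
    ring
  unfold qRacahSummand
  rw [show N + 1 + m - (N + 1 + l) = m - l by omega,
    show N + 1 + m + (N + 1 + l) = 2 * (N + 1) + m + l by omega,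
    show N + 2 + l = N + 1 + l + 1 by ring, hcancel, qpoch_add z, qpoch_add (d * z⁻¹)]
  linear_combination
    qpoch (b * q ^ (N + 1 + l)) q (m - l) * qpoch (c * q ^ (N + 1 + l)) q (m - l) /
        qpoch (qRacahTd q b c d N * q ^ (2 * (N + 1) + m + l)) q (m - l) *
      qpoch z q (N + 1) * qpoch (z * q ^ (N + 1)) q l *
      qpoch (d * z⁻¹) q (N + 1) * qpoch (d * z⁻¹ * q ^ (N + 1)) q l *
      qpoch_inv_pow_shift hq0 hq1 (N + 1) hl

end QRacah

theorem qRacah_monic_factorisation_general (q : ℝ) (hq0 : 0 < q) (hq1 : q < 1)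
    (N m : ℕ) (b c d : ℝ)
    (z : ℝ) :
    qRacahMonic q b c d N (N + 1 + m) z =
      (-1) ^ (N + 1) * q⁻¹ ^ ((N + 1).choose 2) *
          qpoch z q (N + 1) * qpoch (d * z⁻¹) q (N + 1) * q⁻¹ ^ ((N + 1) * m) *
        ∑ l ∈ Finset.range (m + 1),
          qpoch (b * q ^ (N + 1 + l)) q (m - l) * qpoch (c * q ^ (N + 1 + l)) q (m - l) *
              qpoch (q ^ (N + 2 + l)) q (m - l) /
                qpoch (qRacahTd q b c d N * q ^ (2 * (N + 1) + m + l)) q (m - l) *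
            (qpoch (q⁻¹ ^ m) q l * qpoch (z * q ^ (N + 1)) q l *
              qpoch (d * z⁻¹ * q ^ (N + 1)) q l / qpoch q q l) * q ^ l := by
  rw [qRacahMonic_eq_sum_summand, show N + 1 + m + 1 = (N + 1) + (m + 1) by ring, sum_range_add,
    sum_eq_zero fun k hk => qRacahSummand_eq_zero hq0.ne' b c d z (mem_range_succ_iff.1 hk)
      (by omega), zero_add, mul_sum]
  exact sum_congr rfl fun l hl => qRacahSummand_shift hq0 hq1 b c d z (mem_range_succ_iff.1 hl)

/-- Diophantine factorisation of the monic q-Racah polynomial at degree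
`n = N+1+m`. -/
theorem qRacah_monic_factorisation (q : ℝ) (hq0 : 0 < q) (hq1 : q < 1)
    (N m : ℕ) (b c d : ℝ) (hd : d ≠ 0)
    (hden : ∀ l : ℕ, qRacahTd q b c d N * q ^ l ≠ 1)
    (z : ℝ) (hz : z ≠ 0) :
    qRacahMonic q b c d N (N + 1 + m) z =
      (-1) ^ (N + 1) * q⁻¹ ^ ((N + 1).choose 2) *
          qpoch z q (N + 1) * qpoch (d * z⁻¹) q (N + 1) * q⁻¹ ^ ((N + 1) * m) *
        ∑ l ∈ Finset.range (m + 1),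
          qpoch (b * q ^ (N + 1 + l)) q (m - l) * qpoch (c * q ^ (N + 1 + l)) q (m - l) *
              qpoch (q ^ (N + 2 + l)) q (m - l) /
                qpoch (qRacahTd q b c d N * q ^ (2 * (N + 1) + m + l)) q (m - l) *
            (qpoch (q⁻¹ ^ m) q l * qpoch (z * q ^ (N + 1)) q l *
              qpoch (d * z⁻¹ * q ^ (N + 1)) q l / qpoch q q l) * q ^ l :=
  qRacah_monic_factorisation_general q hq0 hq1 N m b c d z
end

section
/- Let $B, D: \mathbb{Z} \to \mathbb{R}$ and define the difference operator $\widetilde{\mathcal{H}} = B(x)(1 - e^{\partial}) + D(x)(1 - e^{-\partial})$ for the Krawtchouk case $B(x) = p(N-x)$, $D(x) = (1-p)x$, eigenvalues $\mathcal{E}(n) = n$. Define $\tilde{\mathcal{F}}(x,N) = \frac{1}{N+1}(x+1 + (N-x)e^{\partial})$ and $\tilde{\mathcal{B}}(x,N,p) = (N+1)(p + (1-p)e^{-\partial})$, where $e^{\pm\partial} f(x) = f(x\pm 1)$. Then $\widetilde{\mathcal{H}} - \mathcal{E}(N+1) = -\tilde{\mathcal{B}}(x,N,p)\,\tilde{\mathcal{F}}(x,N)$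 as operators on functions $f: \mathbb{Z} \to \mathbb{R}$, i.e., for every $f$ and every $x$: $p(N-x)(f(x)-f(x+1)) + (1-p)x(f(x)-f(x-1)) - (N+1) f(x) = -(N+1)\big(p\,\frac{(x+1)f(x)+(N-x)f(x+1)}{N+1} + (1-p)\,\frac{x f(x-1) + (N+1-x) f(x)}{N+1}\big)$. -/
/-- the factorisation `𝓗̃ - 𝓔(N+1) = -𝓑̃(x,N,p) 𝓕̃(x,N)` of the
Krawtchouk difference operator by the forward and backward x-shift operators,
stated pointwise on functions `f : ℤ → ℝ`. -/
theorem krawtchouk_operator_factorisation (p : ℝ) (N : ℕ) (f : ℤ → ℝ) (x : ℤ) :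
    p * ((N : ℝ) - x) * (f x - f (x + 1)) + (1 - p) * (x : ℝ) * (f x - f (x - 1)) -
        ((N : ℝ) + 1) * f x =
      -(((N : ℝ) + 1) *
        (p * (((x : ℝ) + 1) * f x + ((N : ℝ) - x) * f (x + 1)) / ((N : ℝ) + 1) +
          (1 - p) * ((x : ℝ) * f (x - 1) + ((N : ℝ) + 1 - x) * f x) / ((N : ℝ) + 1))) := by
  have h : (N : ℝ) + 1 ≠ 0 := by positivity
  field_simp
  ring
end
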